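/- arXiv:1706.05550 — 4 statements merged into one kernel-verified Lean document; each statement's English description precedes it below -/
import Mathlib

section
/- Let G be a finite simple connected graph of order n ≥ 2 and let k be a real number with 1 ≤ k ≤ κ(G). Then dim_f^k(G) = k if and only if G is isomorphic to the path P_n and 1 ≤ k ≤ 2. -/
open Finset

namespace FracDim

variable {V : Type*}

/-- `R{x,y}`: the set of vertices `z` with `d(x,z) ≠ d(y,z)`. -/
noncomputable def resSet [Fintype V] (G : SimpleGraph V) (x y : V) : Finset V :=
  Finset.univ.filter (fun z => G.dist x z ≠ G.dist y z)

/-- `κ(G) = min { |R{x,y}| : x ≠ y }`. -/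
noncomputable def kappa [Fintype V] (G : SimpleGraph V) : ℕ :=
  sInf {n : ℕ | ∃ x y : V, x ≠ y ∧ (resSet G x y).card = n}

/-- A `k`-resolving function: `g : V → [0,1]` with `g(R{x,y}) ≥ k` for all distinct `x, y`. -/
def IsKResolving [Fintype V] (G : SimpleGraph V) (k : ℝ) (g : V → ℝ) : Prop :=
  (∀ v, 0 ≤ g v ∧ g v ≤ 1) ∧
    ∀ x y : V, x ≠ y → k ≤ ∑ z ∈ resSet G x y, g z

/-- The fractional `k`-metric dimension of `G`. -/
noncomputable def fracKDim [Fintype V] (G : SimpleGraph V) (k : ℝ) : ℝ :=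
  sInf {s : ℝ | ∃ g : V → ℝ, IsKResolving G k g ∧ s = ∑ v, g v}

/-- The fractional metric dimension of `G`. -/
noncomputable def fracDim [Fintype V] (G : SimpleGraph V) : ℝ :=
  fracKDim G 1

end FracDim

/-!
A `k`-resolving function of total weight exactly `k` must vanish outside every `R{x,y}`, so it
lives on the vertices `z` lying in all of them, i.e. those whose distance map `d(z, ·)` is
injective; conversely spreading weight `k` evenly over these vertices is `k`-resolving as soon
as there are at least `k` of them. Since the `k`-resolving functions form a compact set, the
infimum defining `dim_f^k(G)` is attained, so `dim_f^k(G) = k` exactly when `G` has at least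
`k` such vertices. If `z` is one, `v ↦ d(z, v)` is an isomorphism from `G` onto `P_n`, and `P_n`
has exactly two of them, its ends.
-/

namespace SimpleGraph

variable {V W : Type*} {G : SimpleGraph V} {H : SimpleGraph W}

lemma Hom.dist_le (f : G →g H) {u v : V} (h : G.Reachable u v) :
    H.dist (f u) (f v) ≤ G.dist u v := by
  obtain ⟨p, hp⟩ := h.exists_walk_length_eq_dist
  simpa [hp] using SimpleGraph.dist_le (p.map f)

lemma Iso.dist_eq (e : G ≃g H) (u v : V) : H.dist (e u) (e v) = G.dist u v := by
  by_cases h : G.Reachable u v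
  · refine le_antisymm (Hom.dist_le e.toHom h) ?_
    simpa using Hom.dist_le e.symm.toHom (h.map e.toHom)
  · have h' : ¬H.Reachable (e u) (e v) := fun h' => h (by simpa using h'.map e.symm.toHom)
    rw [dist_eq_zero_of_not_reachable h, dist_eq_zero_of_not_reachable h']

lemma Connected.dist_lt_card [Fintype V] (hc : G.Connected) (u v : V) :
    G.dist u v < Fintype.card V := by
  obtain ⟨p, hp, hlen⟩ := hc.exists_path_of_dist u v
  exact hlen ▸ hp.length_lt

lemma Connected.exists_adj_dist_eq_of_dist_eq_succ (hc : G.Connected) {z v : V} {m : ℕ}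
    (hv : G.dist z v = m + 1) : ∃ u, G.Adj u v ∧ G.dist z u = m := by
  obtain ⟨p, hp⟩ := hc.exists_walk_length_eq_dist v z
  cases p with
  | nil => simp_all
  | @cons _ u _ hadj q =>
    refine ⟨u, hadj.symm, ?_⟩
    have hq : G.dist z u ≤ q.length := dist_comm (G := G) ▸ dist_le q
    have htri : G.dist z v ≤ G.dist z u + G.dist u v := hc.dist_triangle
    rw [Walk.length_cons, dist_comm] at hp
    rw [dist_eq_one_iff_adj.2 hadj.symm] at htri
    omega

open Classical in
/-- The vertices `z` such that `{z}` is a resolving set of `G`. -/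
noncomputable def resolvingVertices [Fintype V] (G : SimpleGraph V) : Finset V :=
  univ.filter fun z => Function.Injective (G.dist z)

@[simp]
lemma mem_resolvingVertices [Fintype V] {z : V} :
    z ∈ G.resolvingVertices ↔ Function.Injective (G.dist z) := by
  simp [resolvingVertices]

lemma Iso.card_resolvingVertices_eq [Fintype V] [Fintype W] (e : G ≃g H) :
    #G.resolvingVertices = #H.resolvingVertices := by
  refine card_equiv e.toEquiv fun z => ?_
  have hcomp : H.dist (e z) = G.dist z ∘ e.symm := by
    funext w
    simpa using e.dist_eq z (e.symm w)
  rw [mem_resolvingVertices, mem_resolvingVertices]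
  change _ ↔ Function.Injective (H.dist (e z))
  rw [hcomp]
  exact (Equiv.injective_comp e.symm.toEquiv _).symm

lemma Connected.adj_iff_of_injective_dist (hc : G.Connected) {z : V}
    (hz : Function.Injective (G.dist z)) {u v : V} :
    G.Adj u v ↔ G.dist z u + 1 = G.dist z v ∨ G.dist z v + 1 = G.dist z u := by
  constructor
  · intro h
    have := h.diff_dist_adj (u := z)
    have := hz.ne h.ne
    omega
  · rintro (h | h)
    · obtain ⟨u', hadj, hu'⟩ := hc.exists_adj_dist_eq_of_dist_eq_succ h.symm
      exact hz hu' ▸ hadj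
    · obtain ⟨v', hadj, hv'⟩ := hc.exists_adj_dist_eq_of_dist_eq_succ h.symm
      exact (hz hv' ▸ hadj).symm

lemma Connected.nonempty_iso_pathGraph [Fintype V] (hc : G.Connected) {z : V}
    (hz : Function.Injective (G.dist z)) : Nonempty (G ≃g pathGraph (Fintype.card V)) := by
  let f : V → Fin (Fintype.card V) := fun v => ⟨G.dist z v, hc.dist_lt_card z v⟩
  have hf : Function.Bijective f :=
    (Fintype.bijective_iff_injective_and_card f).2
      ⟨fun a b h => hz (Fin.ext_iff.1 h), Fintype.card_fin _ |>.symm⟩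
  exact ⟨⟨Equiv.ofBijective f hf, by simp [f, pathGraph_adj, hc.adj_iff_of_injective_dist hz]⟩⟩

lemma pathGraph_le_add_length {n : ℕ} {a b : Fin n} (p : (pathGraph n).Walk a b) :
    (b : ℕ) ≤ a + p.length := by
  induction p with
  | nil => simp
  | cons h _ ih =>
    rw [pathGraph_adj] at h
    simp only [Walk.length_cons]
    omega

lemma pathGraph_dist_of_le {n : ℕ} {i j : Fin n} (h : i ≤ j) :
    (pathGraph n).dist i j = j - i := by
  have hupper : ∀ d (j : Fin n), (j : ℕ) = i + d → (pathGraph n).dist i j ≤ d := by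
    intro d
    induction d with
    | zero => intro j hj; simp [Fin.ext (by omega : (j : ℕ) = i)]
    | succ d ih =>
      intro j hj
      have hadj : (pathGraph n).Adj ⟨i + d, by omega⟩ j := pathGraph_adj.2 (.inl hj.symm)
      have := hadj.diff_dist_adj (u := i)
      have := ih ⟨i + d, by omega⟩ rfl
      omega
  obtain ⟨p, hp⟩ := (pathGraph_preconnected n i j).exists_walk_length_eq_dist
  have := pathGraph_le_add_length p
  have := hupper (j - i) j (by rw [Fin.le_def] at h; omega)
  omega

lemma pathGraph_dist {n : ℕ} (i j : Fin n) :
    (pathGraph n).dist i j = (i : ℕ) - j + (j - i) := by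
  rcases le_total i j with h | h
  · rw [pathGraph_dist_of_le h]
    rw [Fin.le_def] at h
    omega
  · rw [dist_comm, pathGraph_dist_of_le h]
    rw [Fin.le_def] at h
    omega

lemma mem_resolvingVertices_pathGraph {n : ℕ} (i : Fin n) :
    i ∈ (pathGraph n).resolvingVertices ↔ (i : ℕ) = 0 ∨ (i : ℕ) = n - 1 := by
  rw [mem_resolvingVertices]
  constructor
  · intro hi
    by_contra! hmid
    obtain ⟨h0, hlast⟩ := hmid
    have := i.isLt
    have hdist : (pathGraph n).dist i ⟨i - 1, by omega⟩ =
        (pathGraph n).dist i ⟨i + 1, by omega⟩ := by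
      simp only [pathGraph_dist]
      omega
    have := Fin.val_eq_of_eq (hi hdist)
    simp only at this
    omega
  · intro hi a b hab
    rw [pathGraph_dist, pathGraph_dist] at hab
    exact Fin.ext (by omega)

lemma card_resolvingVertices_pathGraph {n : ℕ} (hn : 2 ≤ n) :
    #(pathGraph n).resolvingVertices = 2 := by
  have : (pathGraph n).resolvingVertices = {⟨0, by omega⟩, ⟨n - 1, by omega⟩} := by
    ext i
    simp only [mem_resolvingVertices_pathGraph, mem_insert, mem_singleton, Fin.ext_iff]
  rw [this, card_pair (by simp [Fin.ext_iff]; omega)]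

end SimpleGraph

namespace FracDim

variable {V : Type*} [Fintype V] {G : SimpleGraph V} {k : ℝ} {g : V → ℝ}

lemma mem_resSet {x y z : V} : z ∈ resSet G x y ↔ G.dist z x ≠ G.dist z y := by
  simp [resSet, G.dist_comm (u := x), G.dist_comm (u := y)]

lemma mem_resolvingVertices_iff_forall_mem_resSet {z : V} :
    z ∈ G.resolvingVertices ↔ ∀ x y, x ≠ y → z ∈ resSet G x y := by
  simp only [SimpleGraph.mem_resolvingVertices, mem_resSet]
  exact ⟨fun h x y hxy => h.ne hxy, fun h x y => not_imp_not.1 (h x y)⟩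

lemma kappa_le_card_resSet {x y : V} (hxy : x ≠ y) : kappa G ≤ #(resSet G x y) :=
  Nat.sInf_le ⟨x, y, hxy, rfl⟩

lemma isKResolving_one (hk : k ≤ kappa G) : IsKResolving G k 1 :=
  ⟨fun _ => ⟨zero_le_one, le_rfl⟩, fun x y hxy => by
    simpa using hk.trans (Nat.cast_le.2 (kappa_le_card_resSet hxy))⟩

lemma IsKResolving.le_sum [Nontrivial V] (hg : IsKResolving G k g) : k ≤ ∑ v, g v := by
  obtain ⟨x, y, hxy⟩ := exists_pair_ne V
  exact (hg.2 x y hxy).trans (sum_le_sum_of_subset_of_nonneg (subset_univ _)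
    fun v _ _ => (hg.1 v).1)

lemma fracKDim_le_sum (hg : IsKResolving G k g) : fracKDim G k ≤ ∑ v, g v := by
  refine csInf_le ⟨0, ?_⟩ ⟨g, hg, rfl⟩
  rintro _ ⟨g', hg', rfl⟩
  exact sum_nonneg fun v _ => (hg'.1 v).1

lemma isCompact_setOf_isKResolving : IsCompact {g : V → ℝ | IsKResolving G k g} := by
  have hset : {g : V → ℝ | IsKResolving G k g} =
      (⋂ v, {g | g v ∈ Set.Icc 0 1}) ∩
        ⋂ x, ⋂ y, ⋂ (_ : x ≠ y), {g | k ≤ ∑ z ∈ resSet G x y, g z} := by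
    ext g
    simp [IsKResolving]
  have hclosed : IsClosed {g : V → ℝ | IsKResolving G k g} := by
    rw [hset]
    exact (isClosed_iInter fun v => isClosed_Icc.preimage (continuous_apply v)).inter
      (isClosed_iInter fun x => isClosed_iInter fun y => isClosed_iInter fun _ =>
        isClosed_le continuous_const (continuous_finsetSum _ fun z _ => continuous_apply z))
  exact (isCompact_univ_pi fun _ => isCompact_Icc).of_isClosed_subset hclosed
    fun g hg v _ => hg.1 v

lemma exists_isKResolving_sum_eq_fracKDim (hg : IsKResolving G k g) :
    ∃ g₀, IsKResolving G k g₀ ∧ ∑ v, g₀ v = fracKDim G k := by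
  obtain ⟨g₀, hg₀, hmin⟩ := isCompact_setOf_isKResolving.exists_isMinOn ⟨g, hg⟩
    (continuous_finsetSum _ fun v _ => continuous_apply v).continuousOn
  refine ⟨g₀, hg₀, le_antisymm (le_csInf ⟨_, g, hg, rfl⟩ ?_) (fracKDim_le_sum hg₀)⟩
  rintro _ ⟨g', hg', rfl⟩
  exact hmin hg'

lemma IsKResolving.le_card_resolvingVertices (hg : IsKResolving G k g)
    (hsum : ∑ v, g v = k) : k ≤ #G.resolvingVertices := by
  classical
  have hzero : ∀ v ∉ G.resolvingVertices, g v = 0 := by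
    intro v hv
    rw [mem_resolvingVertices_iff_forall_mem_resSet] at hv
    push Not at hv
    obtain ⟨x, y, hxy, hvxy⟩ := hv
    have hsplit := sum_add_sum_compl (resSet G x y) g
    have hle := single_le_sum (fun z _ => (hg.1 z).1) (mem_compl.2 hvxy)
    linarith [hg.2 x y hxy, (hg.1 v).1]
  calc k = ∑ v ∈ G.resolvingVertices, g v :=
        hsum ▸ (sum_subset (subset_univ _) fun v _ hv => hzero v hv).symm
    _ ≤ ∑ v ∈ G.resolvingVertices, 1 := sum_le_sum fun v _ => (hg.1 v).2
    _ = #G.resolvingVertices := by simp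

lemma fracKDim_le_of_le_card_resolvingVertices (hk0 : 0 ≤ k)
    (hk : k ≤ #G.resolvingVertices) : fracKDim G k ≤ k := by
  classical
  set S := G.resolvingVertices
  have hS : ∑ _v ∈ S, k / #S = k := by
    rw [sum_const, nsmul_eq_mul]
    rcases eq_or_ne (#S : ℝ) 0 with h | h
    · rw [h] at hk
      rw [h, zero_mul]
      linarith
    · exact mul_div_cancel₀ k h
  let g : V → ℝ := fun v => if v ∈ S then k / #S else 0
  have hg : IsKResolving G k g := by
    refine ⟨fun v => ?_, fun x y hxy => ?_⟩
    · have := div_le_one_of_le₀ hk (Nat.cast_nonneg _)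
      by_cases hv : v ∈ S <;> simp [g, hv, this, div_nonneg hk0]
    · have hsub : S ⊆ resSet G x y := fun z hz =>
        mem_resolvingVertices_iff_forall_mem_resSet.1 hz x y hxy
      simp [g, sum_ite_mem, inter_eq_right.2 hsub, hS]
  calc fracKDim G k ≤ ∑ v, g v := fracKDim_le_sum hg
    _ = k := by simp [g, sum_ite_mem, hS]

theorem fracKDim_eq_self_iff [Nontrivial V] (hk0 : 0 ≤ k) (hk : k ≤ kappa G) :
    fracKDim G k = k ↔ k ≤ #G.resolvingVertices := by
  obtain ⟨g₀, hg₀, hsum⟩ := exists_isKResolving_sum_eq_fracKDim (isKResolving_one hk)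
  refine ⟨fun h => hg₀.le_card_resolvingVertices (hsum.trans h), fun h => ?_⟩
  exact le_antisymm (fracKDim_le_of_le_card_resolvingVertices hk0 h) (hsum ▸ hg₀.le_sum)

end FracDim

open FracDim in
/-- For a finite simple connected graph `G` of order `n ≥ 2` and a real `k` with
`1 ≤ k ≤ κ(G)`: `dim_f^k(G) = k` iff `G` is isomorphic to the path `P_n` and `k ≤ 2`. -/
theorem fracKDim_eq_k_iff {V : Type*} [Fintype V] (G : SimpleGraph V) (hG : G.Connected)
    (hn : 2 ≤ Fintype.card V) (k : ℝ) (hk1 : 1 ≤ k) (hk2 : k ≤ (kappa G : ℝ)) :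
    fracKDim G k = k ↔
      (Nonempty (G ≃g SimpleGraph.pathGraph (Fintype.card V)) ∧ k ≤ 2) := by
  have : Nontrivial V := Fintype.one_lt_card_iff_nontrivial.mp hn
  rw [fracKDim_eq_self_iff (by linarith) hk2]
  by_cases hpath : Nonempty (G ≃g SimpleGraph.pathGraph (Fintype.card V))
  · obtain ⟨e⟩ := hpath
    rw [e.card_resolvingVertices_eq, SimpleGraph.card_resolvingVertices_pathGraph hn]
    exact ⟨fun h => ⟨⟨e⟩, by exact_mod_cast h⟩, fun h => by exact_mod_cast h.2⟩
  · have hS : G.resolvingVertices = ∅ := eq_empty_of_forall_notMem fun z hz =>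
      hpath (hG.nonempty_iso_pathGraph (SimpleGraph.mem_resolvingVertices.1 hz))
    simp only [hS, card_empty, Nat.cast_zero, hpath, false_and, iff_false, not_le]
    linarith
end

section
/- Let P_n be the path on n ≥ 4 vertices, so that κ(P_n) = n − 1. For every real number k with 2 < k ≤ n − 1, dim_f^k(P_n) = 2 + (k − 2)·(n − 2)/(n − 3). -/
open Finset

/-!
Any two vertices `x ≠ y` of `P_n` are distinguished by every vertex except possibly their
midpoint, which is an interior vertex; the two neighbours of an interior vertex `z` are
distinguished by every vertex but `z`. Hence a `k`-resolving `g` satisfies `k + g z ≤ ∑ g` for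
each of the `n - 2` interior vertices, which together with `g ≤ 1` on the two endpoints gives
`(n - 2) k - 2 ≤ (n - 3) ∑ g`. Equality is attained by the weight `1` on both endpoints and
`t = (k - 2) / (n - 3)` on every interior vertex.
-/

open SimpleGraph

namespace FracDim

section General

variable {V : Type*} [Fintype V] {G : SimpleGraph V}

lemma kappa_eq_of_forall_le_of_exists {m : ℕ} (hle : ∀ x y, x ≠ y → m ≤ #(resSet G x y))
    (hex : ∃ x y, x ≠ y ∧ #(resSet G x y) = m) : kappa G = m :=
  IsLeast.csInf_eq ⟨hex, by rintro _ ⟨x, y, hxy, rfl⟩; exact hle x y hxy⟩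

lemma IsKResolving.add_le_sum [DecidableEq V] {k : ℝ} {g : V → ℝ} (hg : IsKResolving G k g)
    {x y z : V} (hxy : x ≠ y) (hR : resSet G x y = univ.erase z) : k + g z ≤ ∑ v, g v := by
  have := hg.2 x y hxy
  rw [hR, sum_erase_eq_sub (mem_univ z)] at this
  linarith

end General

section Path

variable {n : ℕ}

lemma natAbs_le_length_of_walk_pathGraph {u v : Fin n} (w : (pathGraph n).Walk u v) :
    ((u : ℤ) - v).natAbs ≤ w.length := by
  induction w with
  | nil => simp
  | cons h _ ih =>
    rw [pathGraph_adj] at h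
    rw [Walk.length_cons]
    omega

lemma exists_walk_pathGraph_length (d : ℕ) :
    ∀ u v : Fin n, u.val + d = v.val → ∃ w : (pathGraph n).Walk u v, w.length = d := by
  induction d with
  | zero =>
    intro u v h
    obtain rfl : u = v := Fin.ext (by omega)
    exact ⟨Walk.nil, rfl⟩
  | succ d ih =>
    intro u v h
    obtain ⟨w, hw⟩ := ih ⟨u.val + 1, by omega⟩ v (by simp only; omega)
    exact ⟨Walk.cons (pathGraph_adj.mpr (Or.inl rfl)) w, by simp [hw]⟩

lemma pathGraph_dist (u v : Fin n) : (pathGraph n).dist u v = ((u : ℤ) - v).natAbs := by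
  refine le_antisymm ?_ ?_
  · rcases le_total u.val v.val with h | h
    · obtain ⟨w, hw⟩ := exists_walk_pathGraph_length (v.val - u.val) u v (by omega)
      have := dist_le w
      omega
    · obtain ⟨w, hw⟩ := exists_walk_pathGraph_length (u.val - v.val) v u (by omega)
      have := dist_le w
      rw [dist_comm]
      omega
  · obtain ⟨w, hw⟩ := (pathGraph_preconnected n u v).exists_walk_length_eq_dist
    exact hw ▸ natAbs_le_length_of_walk_pathGraph w

lemma mem_resSet_pathGraph {x y z : Fin n} :
    z ∈ resSet (pathGraph n) x y ↔ ((x : ℤ) - z).natAbs ≠ ((y : ℤ) - z).natAbs := by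
  simp [resSet, pathGraph_dist]

lemma two_mul_eq_add_of_notMem_resSet_pathGraph {x y z : Fin n} (hxy : x ≠ y)
    (hz : z ∉ resSet (pathGraph n) x y) : 2 * z.val = x.val + y.val := by
  rw [mem_resSet_pathGraph, not_ne_iff] at hz
  have := Fin.val_ne_of_ne hxy
  omega

def pathInterior (n : ℕ) : Finset (Fin n) :=
  (Ioo 0 (n - 1)).attachFin fun m hm => by rw [mem_Ioo] at hm; omega

lemma mem_pathInterior {z : Fin n} : z ∈ pathInterior n ↔ 0 < z.val ∧ z.val < n - 1 := by
  rw [pathInterior, mem_attachFin, mem_Ioo]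

lemma card_pathInterior : #(pathInterior n) = n - 2 := by
  rw [pathInterior, card_attachFin, Nat.card_Ioo]
  omega

lemma compl_resSet_pathGraph_subset {x y : Fin n} (hxy : x ≠ y) :
    (resSet (pathGraph n) x y)ᶜ ⊆ pathInterior n := by
  intro z hz
  have := two_mul_eq_add_of_notMem_resSet_pathGraph hxy (mem_compl.mp hz)
  have := Fin.val_ne_of_ne hxy
  rw [mem_pathInterior]
  omega

lemma card_compl_resSet_pathGraph_le_one {x y : Fin n} (hxy : x ≠ y) :
    #(resSet (pathGraph n) x y)ᶜ ≤ 1 := by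
  refine card_le_one.mpr fun a ha b hb => Fin.ext ?_
  have := two_mul_eq_add_of_notMem_resSet_pathGraph hxy (mem_compl.mp ha)
  have := two_mul_eq_add_of_notMem_resSet_pathGraph hxy (mem_compl.mp hb)
  omega

lemma exists_resSet_pathGraph_eq_erase {z : Fin n} (hz : z ∈ pathInterior n) :
    ∃ x y, x ≠ y ∧ resSet (pathGraph n) x y = univ.erase z := by
  rw [mem_pathInterior] at hz
  refine ⟨⟨z.val - 1, by omega⟩, ⟨z.val + 1, by omega⟩, by simp [Fin.ext_iff], ?_⟩
  ext w
  rw [mem_resSet_pathGraph, mem_erase, ← Fin.val_ne_iff]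
  simp only [mem_univ, and_true]
  omega

lemma kappa_pathGraph (hn : 3 ≤ n) : kappa (pathGraph n) = n - 1 := by
  refine kappa_eq_of_forall_le_of_exists (fun x y hxy => ?_) ?_
  · have := card_compl_resSet_pathGraph_le_one hxy
    rw [card_compl, Fintype.card_fin] at this
    omega
  · have h1 : (⟨1, by omega⟩ : Fin n) ∈ pathInterior n := mem_pathInterior.mpr (by simp only; omega)
    obtain ⟨x, y, hxy, hR⟩ := exists_resSet_pathGraph_eq_erase h1
    exact ⟨x, y, hxy, by simp [hR]⟩

lemma card_compl_pathInterior (hn : 2 ≤ n) : #(pathInterior n)ᶜ = 2 := by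
  rw [card_compl, Fintype.card_fin, card_pathInterior]
  omega

lemma cast_card_pathInterior (hn : 2 ≤ n) : (#(pathInterior n) : ℝ) = n - 2 := by
  rw [card_pathInterior, Nat.cast_sub hn, Nat.cast_ofNat]

lemma IsKResolving.pathGraph_mul_sub_two_le (hn : 2 ≤ n) {k : ℝ} {g : Fin n → ℝ}
    (hg : IsKResolving (pathGraph n) k g) : (n - 2) * k - 2 ≤ (n - 3) * ∑ v, g v := by
  have hinterior : ∑ z ∈ pathInterior n, (k + g z) ≤ ∑ _z ∈ pathInterior n, ∑ v, g v :=
    sum_le_sum fun z hz => by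
      obtain ⟨x, y, hxy, hR⟩ := exists_resSet_pathGraph_eq_erase hz
      exact hg.add_le_sum hxy hR
  have hends : ∑ z ∈ (pathInterior n)ᶜ, g z ≤ ∑ _z ∈ (pathInterior n)ᶜ, (1 : ℝ) :=
    sum_le_sum fun z _ => (hg.1 z).2
  have hsplit := sum_add_sum_compl (pathInterior n) g
  simp only [sum_add_distrib, sum_const, nsmul_eq_mul, cast_card_pathInterior hn,
    card_compl_pathInterior hn, Nat.cast_ofNat] at hinterior hends
  linarith

def interiorWeight (n : ℕ) (t : ℝ) (v : Fin n) : ℝ :=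
  if v ∈ pathInterior n then t else 1

lemma interiorWeight_of_mem {t : ℝ} {v : Fin n} (hv : v ∈ pathInterior n) :
    interiorWeight n t v = t :=
  if_pos hv

lemma interiorWeight_of_notMem {t : ℝ} {v : Fin n} (hv : v ∉ pathInterior n) :
    interiorWeight n t v = 1 :=
  if_neg hv

lemma sum_interiorWeight (hn : 2 ≤ n) (t : ℝ) :
    ∑ v, interiorWeight n t v = 2 + (n - 2) * t := by
  rw [← sum_add_sum_compl (pathInterior n),
    sum_congr rfl fun v hv => interiorWeight_of_mem hv,
    sum_congr rfl fun v hv => interiorWeight_of_notMem (mem_compl.mp hv)]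
  simp only [sum_const, nsmul_eq_mul, cast_card_pathInterior hn, card_compl_pathInterior hn]
  push_cast
  ring

lemma isKResolving_interiorWeight (hn : 2 ≤ n) {t : ℝ} (ht0 : 0 ≤ t) (ht1 : t ≤ 1) :
    IsKResolving (pathGraph n) (2 + (n - 3) * t) (interiorWeight n t) := by
  refine ⟨fun v => ?_, fun x y hxy => ?_⟩
  · unfold interiorWeight
    split_ifs <;> constructor <;> linarith
  have hcompl : ∑ z ∈ (resSet (pathGraph n) x y)ᶜ, interiorWeight n t z ≤ t :=
    calc ∑ z ∈ (resSet (pathGraph n) x y)ᶜ, interiorWeight n t z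
        = #(resSet (pathGraph n) x y)ᶜ * t := by
          rw [sum_congr rfl fun z hz => interiorWeight_of_mem (compl_resSet_pathGraph_subset hxy hz),
            sum_const, nsmul_eq_mul]
      _ ≤ 1 * t := by
          gcongr
          exact_mod_cast card_compl_resSet_pathGraph_le_one hxy
      _ = t := one_mul t
  have hsplit := sum_add_sum_compl (resSet (pathGraph n) x y) (interiorWeight n t)
  rw [sum_interiorWeight hn] at hsplit
  linarith

lemma fracKDim_pathGraph (hn : 4 ≤ n) {t : ℝ} (ht0 : 0 ≤ t) (ht1 : t ≤ 1) :
    fracKDim (pathGraph n) (2 + (n - 3) * t) = 2 + (n - 2) * t := by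
  have hn3 : (0 : ℝ) < n - 3 := by
    have : (4 : ℝ) ≤ n := by exact_mod_cast hn
    linarith
  refine IsLeast.csInf_eq ⟨⟨interiorWeight n t, isKResolving_interiorWeight (by omega) ht0 ht1,
    (sum_interiorWeight (by omega) t).symm⟩, ?_⟩
  rintro _ ⟨g, hg, rfl⟩
  have := hg.pathGraph_mul_sub_two_le (by omega)
  refine le_of_mul_le_mul_left ?_ hn3
  linarith

end Path

end FracDim

open FracDim in
/-- For the path `P_n` on `n ≥ 4` vertices, `κ(P_n) = n - 1`, and for every real `k`
with `2 < k ≤ n - 1`, `dim_f^k(P_n) = 2 + (k - 2)·(n - 2)/(n - 3)`. -/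
theorem fracKDim_path_large_k (n : ℕ) (hn : 4 ≤ n) :
    kappa (SimpleGraph.pathGraph n) = n - 1 ∧
      (∀ k : ℝ, 2 < k → k ≤ (n : ℝ) - 1 →
        fracKDim (SimpleGraph.pathGraph n) k
          = 2 + (k - 2) * ((n : ℝ) - 2) / ((n : ℝ) - 3)) := by
  refine ⟨kappa_pathGraph (by omega), fun k hk2 hkn => ?_⟩
  have hn3 : (0 : ℝ) < n - 3 := by
    have : (4 : ℝ) ≤ n := by exact_mod_cast hn
    linarith
  obtain ⟨t, ht0, ht1, rfl⟩ : ∃ t : ℝ, 0 ≤ t ∧ t ≤ 1 ∧ k = 2 + (n - 3) * t :=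
    ⟨(k - 2) / (n - 3), div_nonneg (by linarith) hn3.le, (div_le_one hn3).mpr (by linarith),
      by field_simp; ring⟩
  rw [fracKDim_pathGraph hn ht0 ht1]
  field_simp
  ring
end

section
/- For n ≥ 5, let W_n be the wheel graph obtained from the cycle C_{n−1} by adding one new vertex adjacent to every cycle vertex. Then κ(W_5) = 2 and κ(W_n) = 4 for n ≥ 6, and: dim_f^k(W_5) = 2k for every real k ∈ [1,2]; dim_f^k(W_6) = 3k/2 for every real k ∈ [1,4]; and for n ≥ 7, dim_f^k(W_n) = k(n−1)/4 for every real k ∈ [1,4]. -/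
/-!
Every vertex of a wheel is within distance two of every other (through the hub), so
`R{x,y} = {x, y} ∪ (N(x) ∆ N(y))`. For rim vertices `u ≠ v` of `C_m`, `m ≥ 5`, this contains at
least four rim vertices, because the cycle has no triangles and no two vertices with two common
neighbours; for the hub and a rim vertex `u` it consists of the hub and the `m - 2` rim vertices
not adjacent to `u`. This gives `κ`, and uniform weights on the rim (on all of `W₆`) give the
upper bounds.

For the lower bounds, `R{u,v}` for an edge `uv` of the rim is `N(u) ∪ N(v)`; summing these
constraints over the edges counts every rim vertex four times, so `m k ≤ 4 g(rim)`. In `W₆` the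
hub constraints `g(hub) + g(rim) - g(N(u)) ≥ k` add up to the missing `k / 4`, and in `W₅`
opposite rim vertices have the same neighbours, so `g(u) + g(u + 2) ≥ k`.
-/

open Finset

namespace FracDim

/-- The wheel graph with rim `C_m` (`m` rim vertices) plus a hub (`none`) adjacent to all
rim vertices; `W_n = wheelGraph (n - 1)` has order `n`. -/
def wheelGraph (m : ℕ) : SimpleGraph (Option (Fin m)) :=
  SimpleGraph.fromRel (fun a b =>
    (a = none ∧ b ≠ none) ∨
      (∃ i j : Fin m, a = some i ∧ b = some j ∧ (SimpleGraph.cycleGraph m).Adj i j))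

end FracDim

open SimpleGraph
open scoped symmDiff

namespace FracDim

section General

variable {V : Type*} [Fintype V] {G : SimpleGraph V} {k : ℝ}

theorem resSet_comm (x y : V) : resSet G x y = resSet G y x := by
  ext z
  simp [resSet, ne_comm]

theorem mem_resSet_of_dist_le_two (hG : G.Connected) (hdist : ∀ x y, G.dist x y ≤ 2)
    {x y z : V} (hxy : x ≠ y) :
    z ∈ resSet G x y ↔ z = x ∨ z = y ∨ ¬(G.Adj x z ↔ G.Adj y z) := by
  classical
  have hd : ∀ a b, G.dist a b = if a = b then 0 else if G.Adj a b then 1 else 2 := by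
    intro a b
    split_ifs with hab hadj
    · exact hG.dist_eq_zero_iff.2 hab
    · exact dist_eq_one_iff_adj.2 hadj
    · have h0 := hG.dist_eq_zero_iff.not.2 hab
      have h1 := (dist_eq_one_iff_adj (G := G)).not.2 hadj
      have h2 := hdist a b
      omega
  simp only [resSet, mem_filter, mem_univ, true_and, hd]
  by_cases hx : x = z <;> by_cases hy : y = z <;> by_cases hxz : G.Adj x z <;>
    by_cases hyz : G.Adj y z <;> simp_all [eq_comm (a := z)]

theorem fracKDim_le {g : V → ℝ} (hg : IsKResolving G k g) : fracKDim G k ≤ ∑ v, g v :=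
  csInf_le ⟨0, fun _ ⟨_, hg', hs⟩ => hs ▸ sum_nonneg fun v _ => (hg'.1 v).1⟩ ⟨g, hg, rfl⟩

theorem le_fracKDim {b : ℝ} {g : V → ℝ} (hg : IsKResolving G k g)
    (h : ∀ g, IsKResolving G k g → b ≤ ∑ v, g v) : b ≤ fracKDim G k :=
  le_csInf ⟨_, g, hg, rfl⟩ fun _ ⟨g', hg', hs⟩ => hs ▸ h g' hg'

theorem isKResolving_uniform_on [DecidableEq V] {S : Finset V} {c : ℕ} (hk : 0 < k)
    (hkc : k ≤ c) (hS : ∀ x y, x ≠ y → c ≤ #(resSet G x y ∩ S)) :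
    IsKResolving G k fun v => if v ∈ S then k / c else 0 := by
  have hc : (0 : ℝ) < c := hk.trans_le hkc
  refine ⟨fun v => ?_, fun x y hxy => ?_⟩
  · dsimp only
    split_ifs
    · exact ⟨by positivity, (div_le_one hc).2 hkc⟩
    · exact ⟨le_rfl, zero_le_one⟩
  · rw [sum_ite_mem, sum_const, nsmul_eq_mul]
    calc k = c * (k / c) := by field_simp
      _ ≤ _ := by gcongr; exact_mod_cast hS x y hxy

theorem fracKDim_eq_of_le_card_inter [DecidableEq V] {S : Finset V} {c : ℕ} (hk : 0 < k)
    (hkc : k ≤ c) (hS : ∀ x y, x ≠ y → c ≤ #(resSet G x y ∩ S))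
    (hlow : ∀ g, IsKResolving G k g → k * #S / c ≤ ∑ v, g v) :
    fracKDim G k = k * #S / c := by
  have hg := isKResolving_uniform_on hk hkc hS
  refine le_antisymm ((fracKDim_le hg).trans_eq ?_) (le_fracKDim hg hlow)
  rw [sum_ite_mem, univ_inter, sum_const, nsmul_eq_mul]
  ring

theorem kappa_eq {c : ℕ} (hxy : ∃ x y, x ≠ y ∧ #(resSet G x y) = c)
    (hc : ∀ x y, x ≠ y → c ≤ #(resSet G x y)) : kappa G = c :=
  le_antisymm (Nat.sInf_le hxy) (le_csInf ⟨c, hxy⟩ fun _ ⟨x, y, hne, h⟩ => h ▸ hc x y hne)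

variable [DecidableRel G.Adj]

theorem sum_sum_neighborFinset {M : Type*} [AddCommMonoid M] (f : V → M) :
    ∑ u, ∑ v ∈ G.neighborFinset u, f v = ∑ v, G.degree v • f v := by
  simp_rw [neighborFinset_eq_filter, sum_filter]
  rw [sum_comm]
  refine sum_congr rfl fun v _ => ?_
  simp_rw [G.adj_comm _ v]
  rw [← sum_filter, sum_const, ← neighborFinset_eq_filter, card_neighborFinset_eq_degree]

variable [DecidableEq V]

theorem pair_union_symmDiff_of_adj {u v : V} (h : G.Adj u v)
    (hd : Disjoint (G.neighborFinset u) (G.neighborFinset v)) :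
    {u, v} ∪ G.neighborFinset u ∆ G.neighborFinset v =
      G.neighborFinset u ∪ G.neighborFinset v := by
  rw [hd.symmDiff_eq_sup, sup_eq_union, union_eq_right]
  intro w hw
  rcases Finset.mem_insert.1 hw with rfl | hw
  · exact mem_union_right _ (G.mem_neighborFinset _ _ |>.2 h.symm)
  · rw [mem_singleton.1 hw]
    exact mem_union_left _ (G.mem_neighborFinset _ _ |>.2 h)

theorem four_le_card_pair_union_symmDiff {u v : V} (huv : u ≠ v) (hu : G.degree u = 2)
    (hv : G.degree v = 2) (hadj : G.Adj u v → Disjoint (G.neighborFinset u) (G.neighborFinset v))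
    (hcommon : #(G.neighborFinset u ∩ G.neighborFinset v) ≤ 1) :
    4 ≤ #({u, v} ∪ G.neighborFinset u ∆ G.neighborFinset v) := by
  rw [← card_neighborFinset_eq_degree] at hu hv
  by_cases h : G.Adj u v
  · rw [pair_union_symmDiff_of_adj h (hadj h), card_union_of_disjoint (hadj h), hu, hv]
  · have hdisj : Disjoint {u, v} (G.neighborFinset u ∆ G.neighborFinset v) := by
      simp [Finset.disjoint_left, mem_symmDiff, h, G.adj_comm v u]
    rw [card_union_of_disjoint hdisj, card_pair huv, symmDiff_def, sup_eq_union,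
      card_union_of_disjoint disjoint_sdiff_sdiff, card_sdiff, card_sdiff, inter_comm]
    omega

end General

section Cycle

variable {m : ℕ}

theorem cycleGraph_adj_iff_val (hm : 2 ≤ m) {u v : Fin m} :
    (cycleGraph m).Adj u v ↔ u.val + 1 = v.val ∨ v.val + 1 = u.val ∨
      (u.val = 0 ∧ v.val + 1 = m) ∨ (v.val = 0 ∧ u.val + 1 = m) := by
  rw [cycleGraph_adj']
  have hu := u.isLt
  have hv := v.isLt
  rcases lt_trichotomy u v with h | rfl | h
  · rw [Fin.coe_sub_iff_lt.2 h, Fin.coe_sub_iff_le.2 h.le]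
    rw [Fin.lt_def] at h
    omega
  · rw [Fin.coe_sub_iff_le.2 le_rfl]
    omega
  · rw [Fin.coe_sub_iff_le.2 h.le, Fin.coe_sub_iff_lt.2 h]
    rw [Fin.lt_def] at h
    omega

theorem cycleGraph_degree (hm : 3 ≤ m) (u : Fin m) : (cycleGraph m).degree u = 2 := by
  obtain ⟨n, rfl⟩ : ∃ n, m = n + 3 := ⟨m - 3, by omega⟩
  exact cycleGraph_degree_three_le

theorem card_neighborFinset_cycleGraph (hm : 3 ≤ m) (u : Fin m) :
    #((cycleGraph m).neighborFinset u) = 2 := by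
  rw [card_neighborFinset_eq_degree, cycleGraph_degree hm]

theorem card_compl_neighborFinset_cycleGraph (hm : 3 ≤ m) (u : Fin m) :
    #((cycleGraph m).neighborFinset u)ᶜ = m - 2 := by
  rw [card_compl, Fintype.card_fin, card_neighborFinset_cycleGraph hm]

theorem disjoint_neighborFinset_cycleGraph_of_adj (hm : 4 ≤ m) {u v : Fin m}
    (h : (cycleGraph m).Adj u v) :
    Disjoint ((cycleGraph m).neighborFinset u) ((cycleGraph m).neighborFinset v) := by
  rw [Finset.disjoint_left]
  intro w hu hv
  rw [mem_neighborFinset] at hu hv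
  rw [cycleGraph_adj_iff_val (by omega)] at hu hv h
  have := w.isLt
  omega

theorem card_inter_neighborFinset_cycleGraph_le_one (hm : 5 ≤ m) {u v : Fin m} (huv : u ≠ v) :
    #((cycleGraph m).neighborFinset u ∩ (cycleGraph m).neighborFinset v) ≤ 1 := by
  rw [card_le_one]
  intro a ha b hb
  simp only [mem_inter, mem_neighborFinset, cycleGraph_adj_iff_val (show 2 ≤ m by omega)] at ha hb
  rw [Ne, Fin.ext_iff] at huv
  rw [Fin.ext_iff]
  have := u.isLt
  have := v.isLt
  omega

theorem four_le_card_pair_union_symmDiff_cycleGraph (hm : 5 ≤ m) {u v : Fin m} (huv : u ≠ v) :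
    4 ≤ #({u, v} ∪ (cycleGraph m).neighborFinset u ∆ (cycleGraph m).neighborFinset v) :=
  four_le_card_pair_union_symmDiff huv (cycleGraph_degree (by omega) u)
    (cycleGraph_degree (by omega) v) (disjoint_neighborFinset_cycleGraph_of_adj (by omega))
    (card_inter_neighborFinset_cycleGraph_le_one hm huv)

end Cycle

theorem card_inter_univ_map_some {α : Type*} [Fintype α] [DecidableEq α]
    (s : Finset (Option α)) : #(s ∩ univ.map Function.Embedding.some) = #(eraseNone s) := by
  rw [card_eraseNone_eq_card_erase]
  congr 1
  ext o
  rcases o with _ | a <;> simp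

section Wheel

variable {m : ℕ}

instance : DecidableRel (wheelGraph m).Adj := fun a b =>
  decidable_of_iff' _ (fromRel_adj _ a b)

@[simp]
theorem wheelGraph_adj_none_some (u : Fin m) : (wheelGraph m).Adj none (some u) := by
  simp [wheelGraph]

@[simp]
theorem wheelGraph_adj_some_none (u : Fin m) : (wheelGraph m).Adj (some u) none :=
  (wheelGraph_adj_none_some u).symm

@[simp]
theorem wheelGraph_adj_some_some {u v : Fin m} :
    (wheelGraph m).Adj (some u) (some v) ↔ (cycleGraph m).Adj u v := by
  simp only [wheelGraph, fromRel_adj]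
  constructor
  · rintro ⟨-, h | h⟩ <;> simpa [(cycleGraph m).adj_comm] using h
  · intro h
    exact ⟨by simpa using h.ne, Or.inl (by simpa using h)⟩

theorem wheelGraph_dist_none_le_one (x : Option (Fin m)) : (wheelGraph m).dist none x ≤ 1 := by
  rcases x with _ | u
  · simp
  · exact (dist_eq_one_iff_adj.2 (wheelGraph_adj_none_some u)).le

theorem wheelGraph_connected : (wheelGraph m).Connected :=
  connected_iff_exists_forall_reachable _ |>.2 ⟨none, fun x => by
    rcases x with _ | u
    · rfl
    · exact (wheelGraph_adj_none_some u).reachable⟩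

theorem wheelGraph_dist_le_two (x y : Option (Fin m)) : (wheelGraph m).dist x y ≤ 2 :=
  calc (wheelGraph m).dist x y ≤ (wheelGraph m).dist x none + (wheelGraph m).dist none y :=
        wheelGraph_connected.dist_triangle
    _ ≤ 1 + 1 := by
        rw [dist_comm]
        exact add_le_add (wheelGraph_dist_none_le_one x) (wheelGraph_dist_none_le_one y)

theorem mem_resSet_wheelGraph {x y z : Option (Fin m)} (hxy : x ≠ y) :
    z ∈ resSet (wheelGraph m) x y ↔
      z = x ∨ z = y ∨ ¬((wheelGraph m).Adj x z ↔ (wheelGraph m).Adj y z) :=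
  mem_resSet_of_dist_le_two wheelGraph_connected wheelGraph_dist_le_two hxy

theorem resSet_wheelGraph_some_some {u v : Fin m} (huv : u ≠ v) :
    resSet (wheelGraph m) (some u) (some v) =
      ({u, v} ∪ (cycleGraph m).neighborFinset u ∆ (cycleGraph m).neighborFinset v).map
        Function.Embedding.some := by
  ext z
  rw [mem_resSet_wheelGraph (by simpa using huv)]
  rcases z with _ | w
  · simp
  · simp only [mem_map, mem_union, mem_insert, mem_singleton, mem_symmDiff, mem_neighborFinset,
      Function.Embedding.some_apply, Option.some.injEq, wheelGraph_adj_some_some, exists_eq_right]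
    tauto

theorem resSet_wheelGraph_none_some (u : Fin m) :
    resSet (wheelGraph m) none (some u) = insertNone ((cycleGraph m).neighborFinset u)ᶜ := by
  ext z
  rw [mem_resSet_wheelGraph (by simp)]
  rcases z with _ | w
  · simp
  · simp only [some_mem_insertNone, mem_compl, mem_neighborFinset, reduceCtorEq,
      Option.some.injEq, wheelGraph_adj_none_some, wheelGraph_adj_some_some, true_iff, false_or]
    rcases eq_or_ne w u with rfl | h
    · simp
    · simp [h]

theorem resSet_wheelGraph_of_adj (hm : 4 ≤ m) {u v : Fin m} (h : (cycleGraph m).Adj u v) :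
    resSet (wheelGraph m) (some u) (some v) =
      ((cycleGraph m).neighborFinset u ∪ (cycleGraph m).neighborFinset v).map
        Function.Embedding.some := by
  rw [resSet_wheelGraph_some_some h.ne,
    pair_union_symmDiff_of_adj h (disjoint_neighborFinset_cycleGraph_of_adj hm h)]

theorem resSet_wheelGraph_of_neighborFinset_eq {u v : Fin m} (huv : u ≠ v)
    (h : (cycleGraph m).neighborFinset u = (cycleGraph m).neighborFinset v) :
    resSet (wheelGraph m) (some u) (some v) = {some u, some v} := by
  rw [resSet_wheelGraph_some_some huv, h, symmDiff_self, bot_eq_empty, union_empty, map_insert,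
    map_singleton]
  rfl

theorem resSet_wheelGraph_cases {x y : Option (Fin m)} (hxy : x ≠ y) :
    (∃ u, resSet (wheelGraph m) x y = insertNone ((cycleGraph m).neighborFinset u)ᶜ) ∨
      ∃ u v, u ≠ v ∧ resSet (wheelGraph m) x y =
        ({u, v} ∪ (cycleGraph m).neighborFinset u ∆ (cycleGraph m).neighborFinset v).map
          Function.Embedding.some := by
  rcases x with _ | u <;> rcases y with _ | v
  · exact absurd rfl hxy
  · exact .inl ⟨v, resSet_wheelGraph_none_some v⟩
  · exact .inl ⟨u, by rw [resSet_comm, resSet_wheelGraph_none_some]⟩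
  · have huv : u ≠ v := by simpa using hxy
    exact .inr ⟨u, v, huv, resSet_wheelGraph_some_some huv⟩

theorem two_le_card_eraseNone_resSet_wheelGraph (hm : 4 ≤ m) {x y : Option (Fin m)}
    (hxy : x ≠ y) : 2 ≤ #(eraseNone (resSet (wheelGraph m) x y)) := by
  rcases resSet_wheelGraph_cases hxy with ⟨u, h⟩ | ⟨u, v, huv, h⟩ <;> rw [h]
  · rw [eraseNone_insertNone, card_compl_neighborFinset_cycleGraph (by omega)]
    omega
  · rw [eraseNone_map_some, ← card_pair huv]
    exact card_le_card subset_union_left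

theorem four_le_card_eraseNone_resSet_wheelGraph (hm : 6 ≤ m) {x y : Option (Fin m)}
    (hxy : x ≠ y) : 4 ≤ #(eraseNone (resSet (wheelGraph m) x y)) := by
  rcases resSet_wheelGraph_cases hxy with ⟨u, h⟩ | ⟨u, v, huv, h⟩ <;> rw [h]
  · rw [eraseNone_insertNone, card_compl_neighborFinset_cycleGraph (by omega)]
    omega
  · rw [eraseNone_map_some]
    exact four_le_card_pair_union_symmDiff_cycleGraph (by omega) huv

theorem four_le_card_resSet_wheelGraph (hm : 5 ≤ m) {x y : Option (Fin m)} (hxy : x ≠ y) :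
    4 ≤ #(resSet (wheelGraph m) x y) := by
  rcases resSet_wheelGraph_cases hxy with ⟨u, h⟩ | ⟨u, v, huv, h⟩ <;> rw [h]
  · rw [card_insertNone, card_compl_neighborFinset_cycleGraph (by omega)]
    omega
  · rw [card_map]
    exact four_le_card_pair_union_symmDiff_cycleGraph hm huv

end Wheel

section LowerBounds

variable {m : ℕ} {k : ℝ} {g : Option (Fin m) → ℝ}

theorem sum_sum_neighborFinset_cycleGraph (hm : 3 ≤ m) (f : Fin m → ℝ) :
    ∑ u, ∑ w ∈ (cycleGraph m).neighborFinset u, f w = 2 * ∑ w, f w := by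
  rw [sum_sum_neighborFinset, mul_sum]
  simp [cycleGraph_degree hm]

theorem IsKResolving.mul_le_four_mul_sum_some (hg : IsKResolving (wheelGraph m) k g)
    (hm : 4 ≤ m) :
    m * k ≤ 4 * ∑ w, g (some w) := by
  set A : Fin m → ℝ := fun u => ∑ w ∈ (cycleGraph m).neighborFinset u, g (some w)
  have hadj : ∀ u, ∀ v ∈ (cycleGraph m).neighborFinset u, k ≤ A u + A v := by
    intro u v hv
    rw [mem_neighborFinset] at hv
    have h := hg.2 (some u) (some v) (by simpa using hv.ne)
    rwa [resSet_wheelGraph_of_adj hm hv, sum_map,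
      sum_union (disjoint_neighborFinset_cycleGraph_of_adj hm hv)] at h
  have hA : ∑ u, A u = 2 * ∑ w, g (some w) :=
    sum_sum_neighborFinset_cycleGraph (by omega) _
  -- summing over the darts `(u, v)` of the cycle counts every `A u` four times
  have hdarts := sum_le_sum fun u (_ : u ∈ univ) => sum_le_sum (hadj u)
  simp only [sum_add_distrib, sum_const, card_neighborFinset_cycleGraph (show 3 ≤ m by omega),
    sum_sum_neighborFinset_cycleGraph (show 3 ≤ m by omega) A, card_univ, Fintype.card_fin,
    nsmul_eq_mul, ← mul_sum] at hdarts
  push_cast at hdarts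
  linarith

theorem IsKResolving.mul_add_two_mul_sum_some_le (hg : IsKResolving (wheelGraph m) k g)
    (hm : 3 ≤ m) :
    m * k + 2 * ∑ w, g (some w) ≤ m * (g none + ∑ w, g (some w)) := by
  have hhub : ∀ u, k + ∑ w ∈ (cycleGraph m).neighborFinset u, g (some w) ≤
      g none + ∑ w, g (some w) := by
    intro u
    have h := hg.2 none (some u) (by simp)
    rw [resSet_wheelGraph_none_some, sum_insertNone] at h
    linarith [sum_compl_add_sum ((cycleGraph m).neighborFinset u) fun w => g (some w)]
  have hsum := sum_le_sum fun u (_ : u ∈ univ) => hhub u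
  rw [sum_add_distrib, sum_sum_neighborFinset_cycleGraph hm] at hsum
  simp only [sum_const, card_univ, Fintype.card_fin, nsmul_eq_mul] at hsum
  linarith

theorem IsKResolving.le_add_of_neighborFinset_eq (hg : IsKResolving (wheelGraph m) k g) {u v : Fin m}
    (huv : u ≠ v) (h : (cycleGraph m).neighborFinset u = (cycleGraph m).neighborFinset v) :
    k ≤ g (some u) + g (some v) := by
  have hr := hg.2 _ _ (Option.some_injective _ |>.ne huv)
  rwa [resSet_wheelGraph_of_neighborFinset_eq huv h,
    sum_pair (Option.some_injective _ |>.ne huv)] at hr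

end LowerBounds

theorem fracKDim_wheelGraph_four {k : ℝ} (hk : 0 < k) (hk2 : k ≤ 2) :
    fracKDim (wheelGraph 4) k = 2 * k := by
  have h := fracKDim_eq_of_le_card_inter (G := wheelGraph 4)
    (S := univ.map Function.Embedding.some) (c := 2) hk
    (by exact_mod_cast hk2) (fun x y hxy => by
      rw [card_inter_univ_map_some]
      exact two_le_card_eraseNone_resSet_wheelGraph le_rfl hxy)
    (fun g hg => by
      rw [card_map, card_univ, Fintype.card_fin, Fintype.sum_option, Fin.sum_univ_four]
      have h02 := hg.le_add_of_neighborFinset_eq (u := 0) (v := 2) (by decide) (by decide)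
      have h13 := hg.le_add_of_neighborFinset_eq (u := 1) (v := 3) (by decide) (by decide)
      push_cast
      linarith [(hg.1 none).1])
  rw [h, card_map, card_univ, Fintype.card_fin]
  push_cast
  ring

theorem fracKDim_wheelGraph_five {k : ℝ} (hk : 0 < k) (hk4 : k ≤ 4) :
    fracKDim (wheelGraph 5) k = 3 * k / 2 := by
  have h := fracKDim_eq_of_le_card_inter (G := wheelGraph 5) (S := univ) (c := 4) hk
    (by exact_mod_cast hk4)
    (fun x y hxy => by
      rw [inter_univ]
      exact four_le_card_resSet_wheelGraph le_rfl hxy)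
    (fun g hg => by
      rw [card_univ, Fintype.card_option, Fintype.card_fin, Fintype.sum_option]
      have hrim := hg.mul_le_four_mul_sum_some (by norm_num)
      have hhub := hg.mul_add_two_mul_sum_some_le (by norm_num)
      push_cast at hrim hhub ⊢
      linarith)
  rw [h, card_univ, Fintype.card_option, Fintype.card_fin]
  push_cast
  ring

theorem fracKDim_wheelGraph_of_six_le {m : ℕ} (hm : 6 ≤ m) {k : ℝ} (hk : 0 < k) (hk4 : k ≤ 4) :
    fracKDim (wheelGraph m) k = k * m / 4 := by
  have h := fracKDim_eq_of_le_card_inter (G := wheelGraph m)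
    (S := univ.map Function.Embedding.some) (c := 4) hk
    (by exact_mod_cast hk4) (fun x y hxy => by
      rw [card_inter_univ_map_some]
      exact four_le_card_eraseNone_resSet_wheelGraph hm hxy)
    (fun g hg => by
      rw [card_map, card_univ, Fintype.card_fin, Fintype.sum_option]
      linarith [hg.mul_le_four_mul_sum_some (by omega), (hg.1 none).1])
  rwa [card_map, card_univ, Fintype.card_fin] at h

theorem kappa_wheelGraph_four : kappa (wheelGraph 4) = 2 := by
  refine kappa_eq ⟨some 0, some 2, by decide, ?_⟩ fun x y hxy =>
    (two_le_card_eraseNone_resSet_wheelGraph le_rfl hxy).trans (card_eraseNone_le _)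
  rw [resSet_wheelGraph_of_neighborFinset_eq (by decide) (by decide)]
  rfl

theorem kappa_wheelGraph_of_five_le {m : ℕ} (hm : 5 ≤ m) : kappa (wheelGraph m) = 4 := by
  have hadj : (cycleGraph m).Adj ⟨0, by omega⟩ ⟨1, by omega⟩ :=
    (cycleGraph_adj_iff_val (by omega)).2 (.inl rfl)
  refine kappa_eq ⟨_, _, (Option.some_injective _).ne hadj.ne, ?_⟩ fun x y hxy =>
    four_le_card_resSet_wheelGraph hm hxy
  rw [resSet_wheelGraph_of_adj (by omega) hadj, card_map,
    card_union_of_disjoint (disjoint_neighborFinset_cycleGraph_of_adj (by omega) hadj),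
    card_neighborFinset_cycleGraph (by omega), card_neighborFinset_cycleGraph (by omega)]

end FracDim

open FracDim in
/-- For the wheel graph `W_n` (`n ≥ 5`): `κ(W₅) = 2` and `κ(W_n) = 4` for `n ≥ 6`;
`dim_f^k(W₅) = 2k` for `k ∈ [1,2]`; `dim_f^k(W₆) = 3k/2` for `k ∈ [1,4]`; and for
`n ≥ 7`, `dim_f^k(W_n) = k(n−1)/4` for `k ∈ [1,4]`. -/
theorem fracKDim_wheel :
    kappa (wheelGraph 4) = 2 ∧
      (∀ n : ℕ, 6 ≤ n → kappa (wheelGraph (n - 1)) = 4) ∧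
      (∀ k : ℝ, 1 ≤ k → k ≤ 2 → fracKDim (wheelGraph 4) k = 2 * k) ∧
      (∀ k : ℝ, 1 ≤ k → k ≤ 4 → fracKDim (wheelGraph 5) k = 3 * k / 2) ∧
      (∀ n : ℕ, 7 ≤ n → ∀ k : ℝ, 1 ≤ k → k ≤ 4 →
        fracKDim (wheelGraph (n - 1)) k = k * ((n : ℝ) - 1) / 4) := by
  refine ⟨kappa_wheelGraph_four, fun n hn => kappa_wheelGraph_of_five_le (by omega),
    fun k hk1 hk2 => fracKDim_wheelGraph_four (by linarith) hk2,
    fun k hk1 hk4 => fracKDim_wheelGraph_five (by linarith) hk4, fun n hn k hk1 hk4 => ?_⟩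
  rw [fracKDim_wheelGraph_of_six_le (by omega) (by linarith) hk4, Nat.cast_sub (by omega),
    Nat.cast_one]
end

section
/- For m ≥ 2, let K_{a_1,a_2,…,a_m} be the complete m-partite graph of order n = a_1 + a_2 + … + a_m (each a_i ≥ 1, n ≥ 2). Then κ(K_{a_1,…,a_m}) = 2, and for every real number k with 1 ≤ k ≤ 2: dim_f^k(K_{a_1,…,a_m}) = k(n−1)/2 if a_i = 1 for exactly one index i ∈ {1,…,m}, and dim_f^k(K_{a_1,…,a_m}) = kn/2 otherwise. -/
/-!
In `K_{a₁,…,a_m}` two vertices of one part are resolved only by themselves, and two vertices of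
different parts exactly by the union of their two parts. Hence a `k`-resolving function puts weight
at least `k` on any two vertices of a common part and on any two singleton parts; averaging over
pairs, a part of size at least two carries weight at least `k/2` per vertex, and so do the singleton
parts together unless there is exactly one of them. The constant `k/2`, lowered to `0` on the
unique singleton part when there is one, attains these bounds.
-/

open Finset

theorem Finset.card_mul_le_two_mul_sum_of_le_add {α : Type*} {s : Finset α} {f : α → ℝ} {k : ℝ}
    (hs : #s ≠ 1) (h : ∀ i ∈ s, ∀ j ∈ s, i ≠ j → k ≤ f i + f j) :
    #s * k ≤ 2 * ∑ i ∈ s, f i := by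
  classical
  obtain hs0 | hs2 : #s = 0 ∨ 2 ≤ #s := by omega
  · simp [Finset.card_eq_zero.mp hs0]
  have hc : (2 : ℝ) ≤ #s := by exact_mod_cast hs2
  have hcard_erase : ∀ i ∈ s, ((s.erase i).card : ℝ) = #s - 1 := fun i hi => by
    rw [Finset.card_erase_of_mem hi, Nat.cast_sub (by omega), Nat.cast_one]
  have hpairs : ∑ i ∈ s, ∑ j ∈ s.erase i, (f i + f j) = 2 * (#s - 1) * ∑ i ∈ s, f i := by
    calc ∑ i ∈ s, ∑ j ∈ s.erase i, (f i + f j)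
        = ∑ i ∈ s, ((#s - 1) * f i + (∑ j ∈ s, f j - f i)) := by
          refine Finset.sum_congr rfl fun i hi => ?_
          rw [Finset.sum_add_distrib, Finset.sum_const, nsmul_eq_mul, hcard_erase i hi,
            Finset.sum_erase_eq_sub hi]
      _ = 2 * (#s - 1) * ∑ i ∈ s, f i := by
          rw [Finset.sum_add_distrib, Finset.sum_sub_distrib, ← Finset.mul_sum, Finset.sum_const,
            nsmul_eq_mul]
          ring
  have hlower : #s * ((#s - 1) * k) ≤ ∑ i ∈ s, ∑ j ∈ s.erase i, (f i + f j) := by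
    rw [← nsmul_eq_mul, ← Finset.sum_const]
    refine Finset.sum_le_sum fun i hi => ?_
    rw [← hcard_erase i hi, ← nsmul_eq_mul, ← Finset.sum_const]
    exact Finset.sum_le_sum fun j hj =>
      h i hi j (Finset.mem_of_mem_erase hj) (Finset.ne_of_mem_erase hj).symm
  nlinarith

namespace FracDim

open SimpleGraph

variable {V : Type*} [Fintype V] {G : SimpleGraph V} {k : ℝ}

lemma mem_resSet_left {x y : V} (hxy : x ≠ y) (h : G.Reachable x y) : x ∈ resSet G x y := by
  simpa [resSet] using (h.symm.pos_dist_of_ne hxy.symm).ne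

lemma mem_resSet_right {x y : V} (hxy : x ≠ y) (h : G.Reachable x y) : y ∈ resSet G x y := by
  simpa [resSet] using (h.pos_dist_of_ne hxy).ne'

lemma two_le_card_resSet {x y : V} (hxy : x ≠ y) (h : G.Reachable x y) :
    2 ≤ #(resSet G x y) := by
  classical
  rw [← Finset.card_pair hxy]
  exact Finset.card_le_card <| Finset.insert_subset (mem_resSet_left hxy h)
    (Finset.singleton_subset_iff.mpr (mem_resSet_right hxy h))

lemma kappa_eq_two (hG : G.Preconnected) (h : ∃ x y : V, x ≠ y ∧ #(resSet G x y) = 2) :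
    kappa G = 2 := by
  refine le_antisymm (Nat.sInf_le h) (le_csInf ⟨2, h⟩ ?_)
  rintro _ ⟨x, y, hxy, rfl⟩
  exact two_le_card_resSet hxy (hG x y)

lemma fracKDim_eq {t : ℝ} {g : V → ℝ} (hg : IsKResolving G k g) (hsum : ∑ v, g v = t)
    (hle : ∀ g' : V → ℝ, IsKResolving G k g' → t ≤ ∑ v, g' v) :
    fracKDim G k = t :=
  IsLeast.csInf_eq ⟨⟨g, hg, hsum.symm⟩, by rintro _ ⟨g', hg', rfl⟩; exact hle g' hg'⟩

lemma isKResolving_const_half (hG : G.Preconnected) (hk0 : 0 ≤ k) (hk2 : k ≤ 2) :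
    IsKResolving G k fun _ => k / 2 := by
  refine ⟨fun _ => ⟨by linarith, by linarith⟩, fun x y hxy => ?_⟩
  have hcard : (2 : ℝ) ≤ #(resSet G x y) := by exact_mod_cast two_le_card_resSet hxy (hG x y)
  rw [Finset.sum_const, nsmul_eq_mul]
  nlinarith

end FracDim

namespace SimpleGraph.completeMultipartiteGraph

variable {ι : Type*} {V : ι → Type*} {x y : Σ i, V i}

lemma dist_of_fst_ne (h : x.1 ≠ y.1) : (completeMultipartiteGraph V).dist x y = 1 :=
  dist_eq_one_iff_adj.mpr h

lemma dist_of_fst_eq {w : Σ i, V i} (hw : w.1 ≠ x.1) (hxy : x ≠ y) (h : x.1 = y.1) :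
    (completeMultipartiteGraph V).dist x y = 2 := by
  have hxw : (completeMultipartiteGraph V).Adj x w := Ne.symm hw
  have hwy : (completeMultipartiteGraph V).Adj w y := show w.1 ≠ y.1 from h ▸ hw
  have hle := dist_le (hxw.toWalk.append hwy.toWalk)
  have hlt := (hxw.reachable.trans hwy.reachable).one_lt_dist_of_ne_of_not_adj hxy
    fun hadj => hadj h
  simp only [Walk.length_append, Adj.length_toWalk] at hle
  omega

lemma exists_fst_ne [Nontrivial ι] (hV : ∀ i, Nonempty (V i)) (i : ι) :
    ∃ w : Σ i, V i, w.1 ≠ i :=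
  let ⟨j, hj⟩ := exists_ne i
  ⟨⟨j, (hV j).some⟩, hj⟩

lemma preconnected [Nontrivial ι] (hV : ∀ i, Nonempty (V i)) :
    (completeMultipartiteGraph V).Preconnected := by
  intro x y
  by_cases h : x.1 = y.1
  · obtain ⟨w, hw⟩ := exists_fst_ne hV x.1
    have hxw : (completeMultipartiteGraph V).Adj x w := Ne.symm hw
    have hwy : (completeMultipartiteGraph V).Adj w y := show w.1 ≠ y.1 from h ▸ hw
    exact hxw.reachable.trans hwy.reachable
  · exact Adj.reachable h

end SimpleGraph.completeMultipartiteGraph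

namespace FracDim.completeMultipartiteGraph

open SimpleGraph SimpleGraph.completeMultipartiteGraph

variable {ι : Type*} {V : ι → Type*} [∀ i, Fintype (V i)] {k : ℝ}

variable (V) in
noncomputable def halfOffSingletons (k : ℝ) (v : Σ i, V i) : ℝ :=
  if Fintype.card (V v.1) = 1 then 0 else k / 2

lemma sum_halfOffSingletons_part (i : ι) :
    ∑ b, halfOffSingletons V k ⟨i, b⟩
      = Fintype.card (V i) * (k / 2) - if Fintype.card (V i) = 1 then k / 2 else 0 := by
  by_cases hi : Fintype.card (V i) = 1 <;> simp [halfOffSingletons, hi]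

variable [Fintype ι] {x y : Σ i, V i} {g : (Σ i, V i) → ℝ}

lemma resSet_of_fst_eq [DecidableEq ι] [∀ i, DecidableEq (V i)] [Nontrivial ι]
    (hV : ∀ i, Nonempty (V i)) (hxy : x ≠ y) (h : x.1 = y.1) :
    resSet (completeMultipartiteGraph V) x y = {x, y} := by
  obtain ⟨w, hw⟩ := exists_fst_ne hV x.1
  ext z
  constructor
  · contrapose!
    simp only [Finset.mem_insert, Finset.mem_singleton, not_or, resSet, Finset.mem_filter,
      Finset.mem_univ, true_and, not_not]
    rintro ⟨hzx, hzy⟩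
    by_cases hz : x.1 = z.1
    · rw [dist_of_fst_eq hw (Ne.symm hzx) hz, dist_of_fst_eq (h ▸ hw) (Ne.symm hzy) (h ▸ hz)]
    · rw [dist_of_fst_ne hz, dist_of_fst_ne (h ▸ hz)]
  · simp only [Finset.mem_insert, Finset.mem_singleton]
    rintro (rfl | rfl)
    · exact mem_resSet_left hxy (preconnected hV _ _)
    · exact mem_resSet_right hxy (preconnected hV _ _)

lemma resSet_of_fst_ne [DecidableEq ι] (h : x.1 ≠ y.1) :
    resSet (completeMultipartiteGraph V) x y = ({x.1, y.1} : Finset ι).sigma fun _ => .univ := by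
  ext z
  have hdist (u : Σ i, V i) : (completeMultipartiteGraph V).dist u z = 1 ↔ u.1 ≠ z.1 :=
    dist_eq_one_iff_adj
  simp only [resSet, Finset.mem_filter, Finset.mem_univ, true_and, Finset.mem_sigma,
    Finset.mem_insert, Finset.mem_singleton, and_true]
  by_cases hx : x.1 = z.1
  · have : (completeMultipartiteGraph V).dist y z = 1 := (hdist y).mpr (hx ▸ h).symm
    have : (completeMultipartiteGraph V).dist x z ≠ 1 := fun h1 => (hdist x).mp h1 hx
    grind
  by_cases hy : y.1 = z.1
  · have : (completeMultipartiteGraph V).dist x z = 1 := (hdist x).mpr (hy ▸ h)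
    have : (completeMultipartiteGraph V).dist y z ≠ 1 := fun h1 => (hdist y).mp h1 hy
    grind
  · rw [(hdist x).mpr hx, (hdist y).mpr hy]
    grind

lemma sum_resSet_of_fst_ne {M : Type*} [AddCommMonoid M] (h : x.1 ≠ y.1) (f : (Σ i, V i) → M) :
    ∑ z ∈ resSet (completeMultipartiteGraph V) x y, f z
      = ∑ b, f ⟨x.1, b⟩ + ∑ b, f ⟨y.1, b⟩ := by
  classical
  rw [resSet_of_fst_ne h, Finset.sum_sigma, Finset.sum_pair h]

lemma card_resSet_of_fst_ne (h : x.1 ≠ y.1) :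
    #(resSet (completeMultipartiteGraph V) x y) = Fintype.card (V x.1) + Fintype.card (V y.1) := by
  rw [Finset.card_eq_sum_ones, sum_resSet_of_fst_ne h]
  simp

theorem kappa_eq_two [Nontrivial ι] (hV : ∀ i, Nonempty (V i)) :
    kappa (completeMultipartiteGraph V) = 2 := by
  classical
  refine FracDim.kappa_eq_two (preconnected hV) ?_
  by_cases hbig : ∃ i, 1 < Fintype.card (V i)
  · obtain ⟨i, hi⟩ := hbig
    obtain ⟨b, c, hbc⟩ := Fintype.exists_pair_of_one_lt_card hi
    have hne : (⟨i, b⟩ : Σ i, V i) ≠ ⟨i, c⟩ := by simpa using hbc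
    exact ⟨_, _, hne, by rw [resSet_of_fst_eq hV hne rfl, Finset.card_pair hne]⟩
  · push Not at hbig
    have hone (i : ι) : Fintype.card (V i) = 1 := le_antisymm (hbig i) Fintype.card_pos
    obtain ⟨i, j, hij⟩ := exists_pair_ne ι
    refine ⟨⟨i, (hV i).some⟩, ⟨j, (hV j).some⟩, fun h => hij (congrArg Sigma.fst h), ?_⟩
    rw [card_resSet_of_fst_ne hij, hone, hone]

lemma le_add_of_fst_eq [Nontrivial ι] (hV : ∀ i, Nonempty (V i))
    (hg : IsKResolving (completeMultipartiteGraph V) k g) (hxy : x ≠ y) (h : x.1 = y.1) :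
    k ≤ g x + g y := by
  classical
  simpa [resSet_of_fst_eq hV hxy h, Finset.sum_pair hxy] using hg.2 x y hxy

lemma le_sum_add_sum (hV : ∀ i, Nonempty (V i))
    (hg : IsKResolving (completeMultipartiteGraph V) k g) {i j : ι} (hij : i ≠ j) :
    k ≤ ∑ b, g ⟨i, b⟩ + ∑ b, g ⟨j, b⟩ := by
  have := hg.2 ⟨i, (hV i).some⟩ ⟨j, (hV j).some⟩ fun h => hij (congrArg Sigma.fst h)
  rwa [sum_resSet_of_fst_ne hij] at this

lemma card_mul_le_two_mul_sum_of_card_ne_one [Nontrivial ι] (hV : ∀ i, Nonempty (V i))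
    (hg : IsKResolving (completeMultipartiteGraph V) k g) {i : ι} (hi : Fintype.card (V i) ≠ 1) :
    Fintype.card (V i) * k ≤ 2 * ∑ b, g ⟨i, b⟩ :=
  Finset.card_mul_le_two_mul_sum_of_le_add (s := .univ) hi fun _ _ _ _ hbc =>
    le_add_of_fst_eq hV hg (by simpa using hbc) rfl

lemma sum_card_mul_le_two_mul_sum [Nontrivial ι] (hV : ∀ i, Nonempty (V i))
    (hg : IsKResolving (completeMultipartiteGraph V) k g) (s : Finset ι)
    (hs : #{i ∈ s | Fintype.card (V i) = 1} ≠ 1) :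
    (∑ i ∈ s, (Fintype.card (V i) : ℝ)) * k ≤ 2 * ∑ i ∈ s, ∑ b, g ⟨i, b⟩ := by
  have hsingle : (∑ i ∈ s with Fintype.card (V i) = 1, (Fintype.card (V i) : ℝ)) * k
      ≤ 2 * ∑ i ∈ s with Fintype.card (V i) = 1, ∑ b, g ⟨i, b⟩ := by
    rw [Finset.sum_congr rfl fun i hi => by rw [(Finset.mem_filter.mp hi).2], Finset.sum_const,
      nsmul_eq_mul, Nat.cast_one, mul_one]
    exact Finset.card_mul_le_two_mul_sum_of_le_add hs fun i _ j _ hij => le_sum_add_sum hV hg hij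
  have hbig : (∑ i ∈ s with Fintype.card (V i) ≠ 1, (Fintype.card (V i) : ℝ)) * k
      ≤ 2 * ∑ i ∈ s with Fintype.card (V i) ≠ 1, ∑ b, g ⟨i, b⟩ := by
    rw [Finset.sum_mul, Finset.mul_sum]
    exact Finset.sum_le_sum fun i hi =>
      card_mul_le_two_mul_sum_of_card_ne_one hV hg (Finset.mem_filter.mp hi).2
  rw [← Finset.sum_filter_add_sum_filter_not s (fun i => Fintype.card (V i) = 1)]
  rw [← Finset.sum_filter_add_sum_filter_not s (fun i => Fintype.card (V i) = 1)]
  linarith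

lemma card_mul_le_two_mul_sum [Nontrivial ι] (hV : ∀ i, Nonempty (V i))
    (hg : IsKResolving (completeMultipartiteGraph V) k g)
    (h1 : ¬∃! i, Fintype.card (V i) = 1) :
    Fintype.card (Σ i, V i) * k ≤ 2 * ∑ v, g v := by
  classical
  rw [Fintype.card_sigma, Fintype.sum_sigma, Nat.cast_sum]
  exact sum_card_mul_le_two_mul_sum hV hg .univ (by rwa [Fintype.existsUnique_iff_card_one] at h1)

lemma card_sub_one_mul_le_two_mul_sum [Nontrivial ι] (hV : ∀ i, Nonempty (V i))
    (hg : IsKResolving (completeMultipartiteGraph V) k g)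
    (h1 : ∃! i, Fintype.card (V i) = 1) :
    (Fintype.card (Σ i, V i) - 1) * k ≤ 2 * ∑ v, g v := by
  classical
  obtain ⟨i₀, hi₀, huniq⟩ := h1
  have hs : #{i ∈ Finset.univ.erase i₀ | Fintype.card (V i) = 1} ≠ 1 := by
    rw [Finset.filter_eq_empty_iff.mpr fun i hi hi1 => Finset.ne_of_mem_erase hi (huniq i hi1)]
    simp
  calc (Fintype.card (Σ i, V i) - 1) * k
      = (∑ i ∈ Finset.univ.erase i₀, (Fintype.card (V i) : ℝ)) * k := by
        rw [Finset.sum_erase_eq_sub (Finset.mem_univ i₀), hi₀, Fintype.card_sigma, Nat.cast_sum,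
          Nat.cast_one]
    _ ≤ 2 * ∑ i ∈ Finset.univ.erase i₀, ∑ b, g ⟨i, b⟩ := sum_card_mul_le_two_mul_sum hV hg _ hs
    _ ≤ 2 * ∑ i, ∑ b, g ⟨i, b⟩ := by
        gcongr
        · exact fun _ _ _ => Finset.sum_nonneg fun _ _ => (hg.1 _).1
        · exact Finset.erase_subset _ _
    _ = 2 * ∑ v, g v := by rw [Fintype.sum_sigma]

lemma sum_halfOffSingletons (h1 : ∃! i, Fintype.card (V i) = 1) :
    ∑ v, halfOffSingletons V k v = (Fintype.card (Σ i, V i) - 1) * (k / 2) := by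
  classical
  rw [Fintype.existsUnique_iff_card_one] at h1
  simp only [Fintype.sum_sigma, sum_halfOffSingletons_part, Finset.sum_sub_distrib,
    ← Finset.sum_mul, Finset.sum_ite, Finset.sum_const_zero, add_zero, Finset.sum_const, h1,
    one_smul, Fintype.card_sigma, Nat.cast_sum]
  ring

lemma isKResolving_halfOffSingletons [Nontrivial ι] (hV : ∀ i, Nonempty (V i))
    (h1 : ∃! i, Fintype.card (V i) = 1) (hk0 : 0 ≤ k) (hk2 : k ≤ 2) :
    IsKResolving (completeMultipartiteGraph V) k (halfOffSingletons V k) := by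
  classical
  have hbounds (v : Σ i, V i) : 0 ≤ halfOffSingletons V k v ∧ halfOffSingletons V k v ≤ 1 := by
    unfold halfOffSingletons
    split_ifs <;> constructor <;> linarith
  have hpart_nonneg (i : ι) : 0 ≤ ∑ b, halfOffSingletons V k ⟨i, b⟩ :=
    Finset.sum_nonneg fun b _ => (hbounds _).1
  have hpart_ge (i : ι) (hi : Fintype.card (V i) ≠ 1) :
      k ≤ ∑ b, halfOffSingletons V k ⟨i, b⟩ := by
    have := (Fintype.card_pos_iff (α := V i)).mpr (hV i)
    have : (2 : ℝ) ≤ Fintype.card (V i) := by exact_mod_cast (by omega : 2 ≤ Fintype.card (V i))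
    rw [sum_halfOffSingletons_part, if_neg hi]
    nlinarith
  refine ⟨hbounds, fun x y hxy => ?_⟩
  by_cases h : x.1 = y.1
  · have hx : Fintype.card (V x.1) ≠ 1 := fun hx => hxy <| by
      obtain ⟨i, b⟩ := x
      obtain ⟨j, c⟩ := y
      obtain rfl : i = j := h
      have : Subsingleton (V i) := Fintype.card_le_one_iff_subsingleton.mp hx.le
      rw [Subsingleton.elim b c]
    rw [resSet_of_fst_eq hV hxy h, Finset.sum_pair hxy]
    simp [halfOffSingletons, hx, h ▸ hx]
  · rw [sum_resSet_of_fst_ne h]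
    by_cases hx : Fintype.card (V x.1) = 1
    · have hy : Fintype.card (V y.1) ≠ 1 := fun hy => h (h1.unique hx hy)
      linarith [hpart_nonneg x.1, hpart_ge y.1 hy]
    · linarith [hpart_ge x.1 hx, hpart_nonneg y.1]

end FracDim.completeMultipartiteGraph

open FracDim in
theorem fracKDim_completeMultipartite_general (m : ℕ) (hm : 2 ≤ m) (a : Fin m → ℕ)
    (ha : ∀ i, 1 ≤ a i) :
    kappa (SimpleGraph.completeMultipartiteGraph (fun i : Fin m => Fin (a i))) = 2 ∧
      ∀ k : ℝ, 1 ≤ k → k ≤ 2 →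
        ((∃! i, a i = 1) →
          fracKDim (SimpleGraph.completeMultipartiteGraph (fun i : Fin m => Fin (a i))) k
            = k * ((∑ i, a i : ℕ) - 1 : ℝ) / 2) ∧
        (¬ (∃! i, a i = 1) →
          fracKDim (SimpleGraph.completeMultipartiteGraph (fun i : Fin m => Fin (a i))) k
            = k * ((∑ i, a i : ℕ) : ℝ) / 2) := by
  have : Nontrivial (Fin m) := Fin.nontrivial_iff_two_le.mpr hm
  have hV (i : Fin m) : Nonempty (Fin (a i)) := Fin.pos_iff_nonempty.mp (ha i)
  have hn : (Fintype.card (Σ i, Fin (a i)) : ℝ) = ((∑ i, a i : ℕ) : ℝ) := by simp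
  have hsingle : (∃! i, Fintype.card (Fin (a i)) = 1) ↔ ∃! i, a i = 1 := by
    simp only [Fintype.card_fin]
  refine ⟨completeMultipartiteGraph.kappa_eq_two hV, fun k hk1 hk2 => ⟨fun h1 => ?_, fun h1 => ?_⟩⟩
  · rw [← hsingle] at h1
    refine fracKDim_eq (completeMultipartiteGraph.isKResolving_halfOffSingletons hV h1
      (by linarith) hk2) ?_ fun g hg => ?_
    · rw [completeMultipartiteGraph.sum_halfOffSingletons h1, hn]
      ring
    · have := completeMultipartiteGraph.card_sub_one_mul_le_two_mul_sum hV hg h1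
      rw [hn] at this
      linarith
  · rw [← hsingle] at h1
    refine fracKDim_eq (isKResolving_const_half
      (SimpleGraph.completeMultipartiteGraph.preconnected hV) (by linarith) hk2) ?_ fun g hg => ?_
    · rw [Finset.sum_const, Finset.card_univ, nsmul_eq_mul, hn]
      ring
    · have := completeMultipartiteGraph.card_mul_le_two_mul_sum hV hg h1
      rw [hn] at this
      linarith

open FracDim in
/-- For the complete `m`-partite graph `K_{a₁,…,a_m}` (`m ≥ 2`, each `aᵢ ≥ 1`) of order
`n = Σ aᵢ ≥ 2`: `κ = 2`, and for every real `k` with `1 ≤ k ≤ 2`,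
`dim_f^k = k(n−1)/2` if `aᵢ = 1` for exactly one index `i`, and `dim_f^k = kn/2`
otherwise. -/
theorem fracKDim_completeMultipartite (m : ℕ) (hm : 2 ≤ m) (a : Fin m → ℕ)
    (ha : ∀ i, 1 ≤ a i) (hn : 2 ≤ ∑ i, a i) :
    kappa (SimpleGraph.completeMultipartiteGraph (fun i : Fin m => Fin (a i))) = 2 ∧
      ∀ k : ℝ, 1 ≤ k → k ≤ 2 →
        ((∃! i, a i = 1) →
          fracKDim (SimpleGraph.completeMultipartiteGraph (fun i : Fin m => Fin (a i))) k
            = k * ((∑ i, a i : ℕ) - 1 : ℝ) / 2) ∧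
        (¬ (∃! i, a i = 1) →
          fracKDim (SimpleGraph.completeMultipartiteGraph (fun i : Fin m => Fin (a i))) k
            = k * ((∑ i, a i : ℕ) : ℝ) / 2) :=
  fracKDim_completeMultipartite_general m hm a ha
end
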